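/- arXiv:1806.09928 — 7 statements merged into one kernel-verified Lean document; each statement's English description precedes it below -/
import Mathlib

section
/- In ℝ with the relation x ⊥ y iff x·y ∈ ℚ, the map T defined by T(x) = 0 if x is irrational and T(x) = x/3 if x is rational satisfies: for all x, y with x ⊥ y, |Tx − Ty| ≤ (1/3)·|x − y| (T is a Banach ⊥-contraction), but T is not a Banach contraction on ℝ (there exist x, y with |Tx − Ty| > k|x − y| for every k < 1). -/
/-!
The only rational orthogonal to an irrational `x` is `0`, since `x * y` is irrational for every
rational `y ≠ 0`. So on orthogonal pairs the map either compares two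
rationals, where it is `x ↦ x / 3`, or has both values equal to `0`. Without orthogonality the
jump at a rational point `q ≠ 0`, approached by irrationals, rules out every Lipschitz bound.
-/

open Classical in
noncomputable def vanishOnIrrationals (f : ℝ → ℝ) (x : ℝ) : ℝ :=
  if Irrational x then 0 else f x

theorem Irrational.eq_zero_of_mul_eq_ratCast {x y : ℝ} (hx : Irrational x) (hy : ¬Irrational y)
    (hxy : ∃ q : ℚ, x * y = q) : y = 0 := by
  obtain ⟨r, rfl⟩ := not_not.mp hy
  obtain ⟨q, hq⟩ := hxy
  by_contra hr
  exact (hx.mul_ratCast (by exact_mod_cast hr)).ne_rat q hq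

theorem abs_vanishOnIrrationals_sub_le {f : ℝ → ℝ} {k : ℝ} (hk : 0 ≤ k) (hf0 : f 0 = 0)
    (hf : ∀ x y, |f x - f y| ≤ k * |x - y|) {x y : ℝ} (hxy : ∃ q : ℚ, x * y = q) :
    |vanishOnIrrationals f x - vanishOnIrrationals f y| ≤ k * |x - y| := by
  have hnonneg : 0 ≤ k * |x - y| := by positivity
  unfold vanishOnIrrationals
  by_cases hx : Irrational x <;> by_cases hy : Irrational y
  · simpa [hx, hy] using hnonneg
  · simpa [hx, hy, hx.eq_zero_of_mul_eq_ratCast hy hxy, hf0] using hnonneg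
  · have hyx : ∃ q : ℚ, y * x = q := by simpa only [mul_comm] using hxy
    simpa [hx, hy, hy.eq_zero_of_mul_eq_ratCast hx hyx, hf0] using hnonneg
  · simpa [hx, hy] using hf x y

theorem exists_lt_abs_vanishOnIrrationals_sub {f : ℝ → ℝ} (q : ℚ) (hq : f q ≠ 0) (k : ℝ) :
    ∃ x y : ℝ, k * |x - y| < |vanishOnIrrationals f x - vanishOnIrrationals f y| := by
  have hpos : 0 < |f q| / (|k| + 1) := by positivity
  obtain ⟨x, hx, hdist⟩ := dense_irrational.exists_dist_lt (q : ℝ) hpos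
  refine ⟨x, q, ?_⟩
  have hclose : |k| * |x - q| < |f q| := by
    rw [Real.dist_eq, abs_sub_comm, lt_div_iff₀ (by positivity)] at hdist
    nlinarith [abs_nonneg k, abs_nonneg (x - q)]
  have hfx : vanishOnIrrationals f x = 0 := if_pos hx
  have hfq : vanishOnIrrationals f q = f q := if_neg (Rat.not_irrational q)
  rw [hfx, hfq, zero_sub, abs_neg]
  exact (mul_le_mul_of_nonneg_right (le_abs_self k) (abs_nonneg _)).trans_lt hclose

open Classical in
theorem banach_perp_contraction_not_contraction :
    (let T : ℝ → ℝ := fun x => if Irrational x then 0 else x / 3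
     (∀ x y : ℝ, (∃ q : ℚ, x * y = (q : ℝ)) → |T x - T y| ≤ (1/3) * |x - y|) ∧
     ∀ k : ℝ, k < 1 → ∃ x y : ℝ, |T x - T y| > k * |x - y|) := by
  have third_lipschitz : ∀ x y : ℝ, |x / 3 - y / 3| ≤ 1 / 3 * |x - y| := fun x y => by
    rw [← sub_div, abs_div, abs_of_pos (three_pos : (0 : ℝ) < 3)]
    linarith
  refine ⟨fun x y hxy => abs_vanishOnIrrationals_sub_le (by norm_num) (by norm_num)
    third_lipschitz hxy, fun k _ => exists_lt_abs_vanishOnIrrationals_sub 1 (by norm_num) k⟩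
end

section
/- Let (X, ⊥, d) be a weak orthogonal metric space and T : X → X a weak ⊥-preserving, generalized ⊥-contraction with constant k ∈ [0,1). If x₀ is a weak orthogonal element and x_n = T^n x₀, then d(x_{n+1}, x_{n+2}) ≤ k · d(x_n, x_{n+1}) for all n, and hence d(x_n, x_{n+1}) ≤ k^n · d(x₀, x₁). -/
/-- The generalized contraction comparison quantity. -/
noncomputable def genM {X : Type*} [MetricSpace X] (T : X → X) (x y : X) : ℝ :=
  max (max (max (dist x y) (dist x (T x))) (max (dist y (T y))
    ((dist x (T y) + dist (T x) y) / 2)))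
  (max (max ((dist (T (T x)) x + dist (T (T x)) (T y)) / 2) (dist (T (T x)) (T x)))
    (max (dist (T (T x)) y) (dist (T (T x)) (T y))))

theorem iterate_contraction_estimate {X : Type*} [MetricSpace X]
    (perp : X → X → Prop) (T : X → X) (k : ℝ) (hk0 : 0 ≤ k) (hk1 : k < 1)
    (hpres : ∀ x y, perp x y → (perp (T x) (T y) ∨ perp (T y) (T x)))
    (hcontr : ∀ x y, (perp x y ∨ perp y x) → dist (T x) (T y) ≤ k * genM T x y)
    (x₀ : X) (hx₀ : ∀ y, perp x₀ y ∨ perp y x₀)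
    (x : ℕ → X) (hx : ∀ n, x n = T^[n] x₀) :
    (∀ n : ℕ, dist (x (n+1)) (x (n+2)) ≤ k * dist (x n) (x (n+1))) ∧
    (∀ n : ℕ, dist (x n) (x (n+1)) ≤ k ^ n * dist (x 0) (x 1)) := by
  -- successive iterates are orthogonally related
  have hrel : ∀ n : ℕ, perp (T^[n] x₀) (T^[n+1] x₀) ∨ perp (T^[n+1] x₀) (T^[n] x₀) := by
    intro n
    induction n with
    | zero => exact hx₀ (T^[1] x₀)
    | succ m ih =>
      rw [Function.iterate_succ_apply', Function.iterate_succ_apply']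
      rcases ih with h | h
      · exact hpres _ _ h
      · rcases hpres _ _ h with h' | h'
        · exact Or.inr h'
        · exact Or.inl h'
  have main : ∀ n : ℕ, dist (x (n+1)) (x (n+2)) ≤ k * dist (x n) (x (n+1)) := by
    intro n
    set p := T^[n] x₀ with hp
    have hq : x (n+1) = T p := by rw [hx, Function.iterate_succ_apply']
    have hr : x (n+2) = T (T p) := by
      rw [hx]
      show T^[n+1+1] x₀ = T (T p)
      rw [Function.iterate_succ_apply', Function.iterate_succ_apply']
    have hxn : x n = p := hx n
    rw [hq, hr, hxn]
    set a := dist p (T p) with ha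
    set b := dist (T p) (T (T p)) with hb
    have hrel' : perp p (T p) ∨ perp (T p) p := by
      have := hrel n
      rwa [Function.iterate_succ_apply'] at this
    have hcon := hcontr p (T p) hrel'
    have hd : dist (T p) (T (T p)) ≤ k * genM T p (T p) := hcon
    have hM : genM T p (T p) ≤ max a b := by
      have ha0 : 0 ≤ a := dist_nonneg
      have hb0 : 0 ≤ b := dist_nonneg
      have htri : dist p (T (T p)) ≤ a + b := dist_triangle _ _ _
      have htri2 : dist (T (T p)) p ≤ a + b := by
        rw [dist_comm]; exact htri
      unfold genM
      simp only [dist_self, add_zero]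
      have hab : a + b ≤ 2 * max a b := by
        have := le_max_left a b
        have := le_max_right a b
        linarith
      apply max_le <;> apply max_le
      · apply max_le
        · exact le_max_left a b
        · exact le_max_left a b
      · apply max_le
        · exact le_max_right a b
        · calc dist p (T (T p)) / 2 ≤ (a + b) / 2 := by linarith
            _ ≤ max a b := by
              have := le_max_left a b
              have := le_max_right a b
              linarith
      · apply max_le
        · calc dist (T (T p)) p / 2 ≤ (a + b) / 2 := by linarith
            _ ≤ max a b := by
              have := le_max_left a b
              have := le_max_right a b
              linarith
        · rw [dist_comm]; exact le_max_right a b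
      · apply max_le
        · rw [dist_comm]; exact le_max_right a b
        · positivity
    have hkb : b ≤ k * max a b := le_trans hd (by
      exact mul_le_mul_of_nonneg_left hM hk0)
    rcases max_cases a b with ⟨hm, _⟩ | ⟨hm, _⟩
    · rw [hm] at hkb; exact hkb
    · rw [hm] at hkb
      have hb0 : b = 0 := by nlinarith [dist_nonneg (x := T p) (y := T (T p))]
      rw [hb0]
      positivity
  refine ⟨main, ?_⟩
  intro n
  induction n with
  | zero => simp
  | succ m ih =>
    calc dist (x (m+1)) (x (m+2)) ≤ k * dist (x m) (x (m+1)) := main m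
      _ ≤ k * (k ^ m * dist (x 0) (x 1)) := mul_le_mul_of_nonneg_left ih hk0
      _ = k ^ (m+1) * dist (x 0) (x 1) := by ring
end

section
/- Let (X, ⊥, d) be a weak orthogonal metric space, T : X → X weak ⊥-preserving and a generalized ⊥-contraction with constant k ∈ [0,1). Then the Picard iteration x_n = T^n x₀ starting from a weak orthogonal element x₀ is a Cauchy weak orthogonal sequence: it is Cauchy, and for every n, x_n ⊥ x_{n+1} or x_{n+1} ⊥ x_n. -/
theorem picard_iteration_cauchy_weak_orthogonal {X : Type*} [MetricSpace X]
    (perp : X → X → Prop) (T : X → X) (k : ℝ) (hk0 : 0 ≤ k) (hk1 : k < 1)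
    (hpres : ∀ x y, perp x y → (perp (T x) (T y) ∨ perp (T y) (T x)))
    (hcontr : ∀ x y, (perp x y ∨ perp y x) → dist (T x) (T y) ≤ k * genM T x y)
    (x₀ : X) (hx₀ : ∀ y, perp x₀ y ∨ perp y x₀)
    (x : ℕ → X) (hx : ∀ n, x n = T^[n] x₀) :
    CauchySeq x ∧ ∀ n : ℕ, perp (x n) (x (n+1)) ∨ perp (x (n+1)) (x n) := by
  have hstep : ∀ n, x (n+1) = T (x n) := by
    intro n; rw [hx, hx, Function.iterate_succ_apply']
  have hperp : ∀ n, perp (x n) (x (n+1)) ∨ perp (x (n+1)) (x n) := by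
    intro n
    induction n with
    | zero =>
        rw [hx 0, hstep 0, hx 0]; simp only [Function.iterate_zero_apply]
        exact hx₀ (T x₀)
    | succ m ih =>
        rw [hstep (m+1), hstep m]
        rw [hstep m] at ih
        rcases ih with h | h
        · exact hpres _ _ h
        · exact (hpres _ _ h).symm
  have key : ∀ n, dist (x (n+1)) (x (n+2)) ≤ k * dist (x n) (x (n+1)) := by
    intro n
    have h := hcontr (x n) (x (n+1)) (hperp n)
    rw [← hstep n, ← hstep (n+1)] at h
    set p := dist (x n) (x (n+1)) with hp
    set q := dist (x (n+1)) (x (n+2)) with hq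
    have hM : genM T (x n) (x (n+1)) ≤ max p q := by
      unfold genM
      rw [← hstep n, ← hstep (n+1)]
      have hp0 : 0 ≤ p := dist_nonneg
      have hq0 : 0 ≤ q := dist_nonneg
      have h1 : dist (x n) (x (n+2)) ≤ p + q := dist_triangle _ (x (n+1)) _
      have h2 : dist (x (n+2)) (x n) ≤ p + q := by rw [dist_comm]; exact h1
      simp only [max_le_iff]
      refine ⟨⟨⟨le_max_left _ _, le_max_left _ _⟩, le_max_right _ _, ?_⟩,
        ⟨?_, by rw [dist_comm]; exact le_max_right _ _⟩,
        by rw [dist_comm]; exact le_max_right _ _, ?_⟩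
      · rw [dist_self]
        have : p + q ≤ max p q + max p q := by
          exact add_le_add (le_max_left _ _) (le_max_right _ _)
        linarith
      · rw [dist_self]
        have : p + q ≤ max p q + max p q :=
          add_le_add (le_max_left _ _) (le_max_right _ _)
        linarith
      · rw [dist_self]; positivity
    have h' : q ≤ k * max p q :=
      h.trans (mul_le_mul_of_nonneg_left hM hk0)
    rcases le_total q p with hqp | hpq
    · rwa [max_eq_left hqp] at h'
    · rw [max_eq_right hpq] at h'
      have hq0 : 0 ≤ q := dist_nonneg
      have hp0 : 0 ≤ p := dist_nonneg
      nlinarith [mul_nonneg hk0 hp0, mul_le_mul_of_nonneg_left hk1.le hq0]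
  have geom : ∀ n, dist (x n) (x (n+1)) ≤ dist (x 0) (x 1) * k ^ n := by
    intro n
    induction n with
    | zero => simp
    | succ m ih =>
        calc dist (x (m+1)) (x (m+2)) ≤ k * dist (x m) (x (m+1)) := key m
          _ ≤ k * (dist (x 0) (x 1) * k ^ m) := by
              exact mul_le_mul_of_nonneg_left ih hk0
          _ = dist (x 0) (x 1) * k ^ (m+1) := by ring
  exact ⟨cauchySeq_of_le_geometric k _ hk1 geom, hperp⟩
end

section
/- Let (X, ⊥, d) be a weak orthogonal metric space that is T-orbitally O_w-complete, and let T : X → X be weak ⊥-preserving, orbitally O_w-continuous, and a generalized ⊥-contraction for some k ∈ [0,1). Then T has a unique fixed point. -/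
lemma genM_succ_le {X : Type*} [MetricSpace X] (T : X → X) (a : X) :
    genM T a (T a) ≤ max (dist a (T a)) (dist (T a) (T (T a))) := by
  unfold genM
  have tri := dist_triangle a (T a) (T (T a))
  have h1 : (0:ℝ) ≤ max (dist a (T a)) (dist (T a) (T (T a))) :=
    le_max_of_le_left dist_nonneg
  have e0 := le_max_left (dist a (T a)) (dist (T a) (T (T a)))
  have e1 := le_max_right (dist a (T a)) (dist (T a) (T (T a)))
  have hc1 : dist (T (T a)) (T a) = dist (T a) (T (T a)) := dist_comm _ _
  have hc2 : dist (T (T a)) a = dist a (T (T a)) := dist_comm _ _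
  simp only [dist_self]
  apply max_le <;> apply max_le <;> apply max_le <;>
    first
      | exact e0
      | exact e1
      | (rw [hc1]; exact e1)
      | exact h1
      | nlinarith [e0, e1, tri, hc2]

theorem fixed_point_orbitally_continuous {X : Type*} [MetricSpace X]
    (perp : X → X → Prop) (T : X → X) (k : ℝ) (hk0 : 0 ≤ k) (hk1 : k < 1)
    (hweak : ∃ x₀ : X, ∀ y, perp x₀ y ∨ perp y x₀)
    (hcomplete : ∀ (x : X) (y : ℕ → X), (∀ n, ∃ m : ℕ, y n = T^[m] x) →
      CauchySeq y → (∀ n, perp (y n) (y (n+1)) ∨ perp (y (n+1)) (y n)) →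
      ∃ z : X, Filter.Tendsto y Filter.atTop (nhds z))
    (hcont : ∀ (z : X) (x : X) (y : ℕ → X), (∀ n, ∃ m : ℕ, y n = T^[m] x) →
      (∀ n, perp (y n) (y (n+1)) ∨ perp (y (n+1)) (y n)) →
      Filter.Tendsto y Filter.atTop (nhds z) →
      Filter.Tendsto (fun n => T (y n)) Filter.atTop (nhds (T z)))
    (hpres : ∀ x y, perp x y → (perp (T x) (T y) ∨ perp (T y) (T x)))
    (hcontr : ∀ x y, (perp x y ∨ perp y x) → dist (T x) (T y) ≤ k * genM T x y) :
    ∃! z : X, T z = z := by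
  obtain ⟨x₀, hx₀⟩ := hweak
  set x : ℕ → X := fun n => T^[n] x₀ with hxdef
  have hstep : ∀ n, x (n+1) = T (x n) := fun n => Function.iterate_succ_apply' T n x₀
  have horbit : ∀ n, ∃ m : ℕ, x n = T^[m] x₀ := fun n => ⟨n, rfl⟩
  have hP : ∀ n, perp (x n) (x (n+1)) ∨ perp (x (n+1)) (x n) := by
    intro n
    induction n with
    | zero => simpa [x] using hx₀ (T x₀)
    | succ n ih =>
      rcases ih with h | h
      · have h2 := hpres _ _ h
        rw [← hstep n, ← hstep (n+1)] at h2
        exact h2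
      · have h2 := hpres _ _ h
        rw [← hstep n, ← hstep (n+1)] at h2
        exact h2.symm
  -- key contraction step
  have key : ∀ n, dist (x (n+1)) (x (n+2)) ≤ k * dist (x n) (x (n+1)) := by
    intro n
    have hb : dist (T (x n)) (T (x (n+1))) ≤ k * genM T (x n) (x (n+1)) :=
      hcontr _ _ (hP n)
    have hM := genM_succ_le T (x n)
    rw [← hstep n, ← hstep (n+1)] at hM
    rw [← hstep n, ← hstep (n+1)] at hb
    have h2 : dist (x (n+1)) (x (n+2)) ≤
        k * max (dist (x n) (x (n+1))) (dist (x (n+1)) (x (n+2))) :=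
      hb.trans (by nlinarith [hM])
    rcases le_total (dist (x (n+1)) (x (n+2))) (dist (x n) (x (n+1))) with h | h
    · rw [max_eq_left h] at h2; exact h2
    · rw [max_eq_right h] at h2
      nlinarith [dist_nonneg (x := x n) (y := x (n+1)),
        dist_nonneg (x := x (n+1)) (y := x (n+2)),
        mul_nonneg hk0 (dist_nonneg (x := x n) (y := x (n+1)))]
  have hgeom : ∀ n, dist (x n) (x (n+1)) ≤ dist (x 0) (x 1) * k ^ n := by
    intro n
    induction n with
    | zero => simp
    | succ n ih =>
      calc dist (x (n+1)) (x (n+2)) ≤ k * dist (x n) (x (n+1)) := key n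
        _ ≤ k * (dist (x 0) (x 1) * k ^ n) := by nlinarith [ih]
        _ = dist (x 0) (x 1) * k ^ (n+1) := by ring
  have hcauchy : CauchySeq x := cauchySeq_of_le_geometric k _ hk1 hgeom
  obtain ⟨z, hz⟩ := hcomplete x₀ x horbit hcauchy hP
  have hTz : Filter.Tendsto (fun n => T (x n)) Filter.atTop (nhds (T z)) :=
    hcont z x₀ x horbit hP hz
  have hshift : Filter.Tendsto (fun n => x (n+1)) Filter.atTop (nhds z) :=
    hz.comp (Filter.tendsto_add_atTop_nat 1)
  have hfix : T z = z := by
    have h3 : Filter.Tendsto (fun n => T (x n)) Filter.atTop (nhds z) := by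
      have h4 : (fun n => T (x n)) = fun n => x (n+1) := by
        funext n; rw [hstep n]
      rw [h4]; exact hshift
    exact tendsto_nhds_unique hTz h3
  refine ⟨z, hfix, ?_⟩
  intro w hw
  -- uniqueness
  have hQ : ∀ n, perp (x n) w ∨ perp w (x n) := by
    intro n
    induction n with
    | zero => simpa [x] using hx₀ w
    | succ n ih =>
      rcases ih with h | h
      · have h2 := hpres _ _ h
        rw [hw, ← hstep n] at h2
        exact h2
      · have h2 := hpres _ _ h
        rw [hw, ← hstep n] at h2
        exact h2.symm
  have hd : ∀ n, dist (x (n+1)) w ≤ k * genM T (x n) w := by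
    intro n
    have h2 := hcontr (x n) w (hQ n)
    rw [hw, ← hstep n] at h2
    exact h2
  have hshift2 : Filter.Tendsto (fun n => x (n+2)) Filter.atTop (nhds z) :=
    hz.comp (Filter.tendsto_add_atTop_nat 2)
  have hgen_eq : ∀ n, genM T (x n) w =
      max (max (max (dist (x n) w) (dist (x n) (x (n+1)))) (max (dist w w)
        ((dist (x n) w + dist (x (n+1)) w) / 2)))
      (max (max ((dist (x (n+2)) (x n) + dist (x (n+2)) w) / 2)
        (dist (x (n+2)) (x (n+1))))
        (max (dist (x (n+2)) w) (dist (x (n+2)) w))) := by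
    intro n
    unfold genM
    rw [hw, ← hstep n, ← hstep (n+1)]
  have d1 : Filter.Tendsto (fun n => dist (x n) w) Filter.atTop (nhds (dist z w)) :=
    hz.dist tendsto_const_nhds
  have d2 : Filter.Tendsto (fun n => dist (x n) (x (n+1))) Filter.atTop
      (nhds (dist z z)) := hz.dist hshift
  have d3 : Filter.Tendsto (fun n => dist (x (n+1)) w) Filter.atTop
      (nhds (dist z w)) := hshift.dist tendsto_const_nhds
  have d4 : Filter.Tendsto (fun n => dist (x (n+2)) (x n)) Filter.atTop
      (nhds (dist z z)) := hshift2.dist hz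
  have d5 : Filter.Tendsto (fun n => dist (x (n+2)) (x (n+1))) Filter.atTop
      (nhds (dist z z)) := hshift2.dist hshift
  have d6 : Filter.Tendsto (fun n => dist (x (n+2)) w) Filter.atTop
      (nhds (dist z w)) := hshift2.dist tendsto_const_nhds
  have dconst : Filter.Tendsto (fun _ : ℕ => dist w w) Filter.atTop
      (nhds (dist w w)) := tendsto_const_nhds
  have hlim :
      Filter.Tendsto (fun n =>
        max (max (max (dist (x n) w) (dist (x n) (x (n+1)))) (max (dist w w)
          ((dist (x n) w + dist (x (n+1)) w) / 2)))
        (max (max ((dist (x (n+2)) (x n) + dist (x (n+2)) w) / 2)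
          (dist (x (n+2)) (x (n+1))))
          (max (dist (x (n+2)) w) (dist (x (n+2)) w)))) Filter.atTop
        (nhds (max (max (max (dist z w) (dist z z)) (max (dist w w)
          ((dist z w + dist z w) / 2)))
        (max (max ((dist z z + dist z w) / 2) (dist z z))
          (max (dist z w) (dist z w))))) :=
    ((d1.max d2).max (dconst.max ((d1.add d3).div_const 2))).max
      ((((d4.add d6).div_const 2).max d5).max (d6.max d6))
  have hval : max (max (max (dist z w) (dist z z)) (max (dist w w)
        ((dist z w + dist z w) / 2)))
      (max (max ((dist z z + dist z w) / 2) (dist z z))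
        (max (dist z w) (dist z w))) = dist z w := by
    have h0 : (0:ℝ) ≤ dist z w := dist_nonneg
    simp only [dist_self]
    apply le_antisymm
    · apply max_le <;> apply max_le <;> apply max_le <;> linarith
    · exact le_max_of_le_left (le_max_of_le_left (le_max_left _ _))
  rw [hval] at hlim
  have htend : Filter.Tendsto (fun n => genM T (x n) w) Filter.atTop
      (nhds (dist z w)) :=
    Filter.Tendsto.congr (fun n => (hgen_eq n).symm) hlim
  have htendR : Filter.Tendsto (fun n => k * genM T (x n) w) Filter.atTop
      (nhds (k * dist z w)) := htend.const_mul k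
  have hle : dist z w ≤ k * dist z w :=
    le_of_tendsto_of_tendsto' d3 htendR hd
  have hzero : dist z w ≤ 0 := by nlinarith [dist_nonneg (x := z) (y := w)]
  have : z = w := dist_eq_zero.mp (le_antisymm hzero dist_nonneg)
  exact this.symm
end

section
/- Let (X, ⊥, d) be a weak orthogonal metric space that is T-orbitally O_w-complete, and let T : X → X be weak ⊥-preserving and a generalized ⊥-contraction for some k ∈ [0,1). Suppose additionally (O1): every O_w-sequence in an orbit of T converging to a point z has a subsequence whose terms are all orthogonally related to z. Then T has a unique fixed point. -/
theorem fixed_point_condition_O1 {X : Type*} [MetricSpace X]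
    (perp : X → X → Prop) (T : X → X) (k : ℝ) (hk0 : 0 ≤ k) (hk1 : k < 1)
    (hweak : ∃ x₀ : X, ∀ y, perp x₀ y ∨ perp y x₀)
    (hcomplete : ∀ (x : X) (y : ℕ → X), (∀ n, ∃ m : ℕ, y n = T^[m] x) →
      CauchySeq y → (∀ n, perp (y n) (y (n+1)) ∨ perp (y (n+1)) (y n)) →
      ∃ z : X, Filter.Tendsto y Filter.atTop (nhds z))
    (hO1 : ∀ (z : X) (x : X) (y : ℕ → X), (∀ n, ∃ m : ℕ, y n = T^[m] x) →
      (∀ n, perp (y n) (y (n+1)) ∨ perp (y (n+1)) (y n)) →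
      Filter.Tendsto y Filter.atTop (nhds z) →
      ∃ φ : ℕ → ℕ, StrictMono φ ∧ ∀ j, perp (y (φ j)) z ∨ perp z (y (φ j)))
    (hpres : ∀ x y, perp x y → (perp (T x) (T y) ∨ perp (T y) (T x)))
    (hcontr : ∀ x y, (perp x y ∨ perp y x) → dist (T x) (T y) ≤ k * genM T x y) :
    ∃! z : X, T z = z := by
  obtain ⟨x₀, hx₀⟩ := hweak
  set x : ℕ → X := fun n => T^[n] x₀ with hxdef
  have hstep : ∀ n, x (n+1) = T (x n) := by
    intro n; rw [hxdef]; exact Function.iterate_succ_apply' T n x₀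
  have hx0 : x 0 = x₀ := rfl
  have horbit : ∀ n, ∃ m, x n = T^[m] x₀ := fun n => ⟨n, by rw [hxdef]⟩
  -- the orthogonal chain
  have hchain : ∀ n, perp (x n) (x (n+1)) ∨ perp (x (n+1)) (x n) := by
    intro n
    induction n with
    | zero => rw [hx0, hstep, hx0]; exact hx₀ (T x₀)
    | succ n ih =>
      rcases ih with h | h
      · have h' := hpres _ _ h
        rw [← hstep (n+1), ← hstep n] at h'
        exact h'
      · have h' := hpres _ _ h
        rw [← hstep (n+1), ← hstep n] at h'
        exact h'.symm
  -- consecutive distances contract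
  have hA : ∀ n, dist (x (n+1)) (x (n+2)) ≤ k * dist (x n) (x (n+1)) := by
    intro n
    have e1 : T (x n) = x (n+1) := (hstep n).symm
    have e2 : T (x (n+1)) = x (n+2) := (hstep (n+1)).symm
    have hco := hcontr (x n) (x (n+1)) (hchain n)
    set dn := dist (x n) (x (n+1)) with hdn
    set dm := dist (x (n+1)) (x (n+2)) with hdm
    have hM : genM T (x n) (x (n+1)) ≤ max dn dm := by
      have t1 : dist (x n) (x (n+2)) ≤ dn + dm := dist_triangle _ _ _
      have c1 : dist (x (n+2)) (x n) = dist (x n) (x (n+2)) := dist_comm _ _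
      have c2 : dist (x (n+2)) (x (n+1)) = dm := dist_comm _ _
      have hL : dn ≤ max dn dm := le_max_left _ _
      have hR : dm ≤ max dn dm := le_max_right _ _
      have h0 : (0:ℝ) ≤ dn := dist_nonneg
      simp only [genM, e1, e2, dist_self, add_zero, zero_add, max_le_iff]
      refine ⟨⟨⟨?_, ?_⟩, ?_, ?_⟩, ⟨?_, ?_⟩, ?_, ?_⟩ <;> linarith
    have key : dm ≤ k * max dn dm := by
      calc dm = dist (T (x n)) (T (x (n+1))) := by rw [e1, e2]
        _ ≤ k * genM T (x n) (x (n+1)) := hco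
        _ ≤ k * max dn dm := by
            exact mul_le_mul_of_nonneg_left hM hk0
    rcases le_total dm dn with h | h
    · calc dm ≤ k * max dn dm := key
        _ = k * dn := by rw [max_eq_left h]
    · have h2 : dm ≤ k * dm := by rwa [max_eq_right h] at key
      have h3 : (0:ℝ) ≤ dn := dist_nonneg
      nlinarith [mul_nonneg hk0 h3]
  -- geometric bound
  have hgeo : ∀ n, dist (x n) (x (n+1)) ≤ k ^ n * dist (x 0) (x 1) := by
    intro n
    induction n with
    | zero => simp
    | succ n ih =>
      calc dist (x (n+1)) (x (n+2)) ≤ k * dist (x n) (x (n+1)) := hA n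
        _ ≤ k * (k ^ n * dist (x 0) (x 1)) := mul_le_mul_of_nonneg_left ih hk0
        _ = k ^ (n+1) * dist (x 0) (x 1) := by ring
  have hcauchy : CauchySeq x := by
    apply cauchySeq_of_le_geometric k (dist (x 0) (x 1)) hk1
    intro n
    calc dist (x n) (x (n+1)) ≤ k ^ n * dist (x 0) (x 1) := hgeo n
      _ = dist (x 0) (x 1) * k ^ n := mul_comm _ _
  obtain ⟨z, hz⟩ := hcomplete x₀ x horbit hcauchy hchain
  obtain ⟨φ, hφ, hrel⟩ := hO1 z x₀ x horbit hchain hz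
  -- z is a fixed point
  have hfix : T z = z := by
    have hc : ∀ ε : ℝ, 0 < ε → (1 - k) * dist z (T z) ≤ (1 + 3*k) * ε := by
      intro ε hε
      obtain ⟨N, hN⟩ := Metric.tendsto_atTop.mp hz ε hε
      set m := φ N with hmdef
      have hm : N ≤ m := hφ.le_apply
      have a0 : dist (x m) z < ε := hN m hm
      have a1 : dist (x (m+1)) z < ε := hN _ (by omega)
      have a2 : dist (x (m+2)) z < ε := hN _ (by omega)
      have e1 : T (x m) = x (m+1) := (hstep m).symm
      have e2 : T (x (m+1)) = x (m+2) := (hstep (m+1)).symm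
      have hco := hcontr (x m) z (hrel N)
      set c := dist z (T z) with hcdef
      have hc0 : (0:ℝ) ≤ c := dist_nonneg
      have hM : genM T (x m) z ≤ c + 2*ε := by
        have t1 : dist (x m) (x (m+1)) ≤ dist (x m) z + dist z (x (m+1)) :=
          dist_triangle _ _ _
        have t2 : dist (x m) (T z) ≤ dist (x m) z + c := dist_triangle _ _ _
        have t3 : dist (x (m+2)) (x m) ≤ dist (x (m+2)) z + dist z (x m) :=
          dist_triangle _ _ _
        have t4 : dist (x (m+2)) (T z) ≤ dist (x (m+2)) z + c := dist_triangle _ _ _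
        have t5 : dist (x (m+2)) (x (m+1)) ≤ dist (x (m+2)) z + dist z (x (m+1)) :=
          dist_triangle _ _ _
        have c1 : dist z (x (m+1)) = dist (x (m+1)) z := dist_comm _ _
        have c2 : dist z (x m) = dist (x m) z := dist_comm _ _
        simp only [genM, e1, e2, max_le_iff]
        refine ⟨⟨⟨?_, ?_⟩, ?_, ?_⟩, ⟨?_, ?_⟩, ?_, ?_⟩ <;> linarith
      have tri : c ≤ dist z (x (m+1)) + dist (x (m+1)) (T z) := dist_triangle _ _ _
      have h2 : dist (x (m+1)) (T z) ≤ k * (c + 2*ε) := by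
        calc dist (x (m+1)) (T z) = dist (T (x m)) (T z) := by rw [e1]
          _ ≤ k * genM T (x m) z := hco
          _ ≤ k * (c + 2*ε) := mul_le_mul_of_nonneg_left hM hk0
      have c1 : dist z (x (m+1)) = dist (x (m+1)) z := dist_comm _ _
      nlinarith
    have hc0 : (0:ℝ) ≤ dist z (T z) := dist_nonneg
    have h1k : 0 < 1 - k := by linarith
    have hpos : (0:ℝ) < 1 + 3*k := by linarith
    have hle : (1 - k) * dist z (T z) ≤ 0 := by
      apply le_of_forall_pos_le_add
      intro ε hε
      have := hc (ε / (1 + 3*k)) (div_pos hε hpos)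
      rw [mul_div_cancel₀ _ (ne_of_gt hpos)] at this
      linarith
    have : dist z (T z) ≤ 0 := by nlinarith
    have : dist z (T z) = 0 := le_antisymm this hc0
    exact (dist_eq_zero.mp this).symm
  refine ⟨z, hfix, ?_⟩
  intro w hw
  -- chain relation with w
  have hrelw : ∀ n, perp (x n) w ∨ perp w (x n) := by
    intro n
    induction n with
    | zero => rw [hx0]; exact hx₀ w
    | succ n ih =>
      rw [hstep n]
      rcases ih with h | h
      · have h' := hpres _ _ h; rw [hw] at h'; exact h'
      · have h' := hpres _ _ h; rw [hw] at h'; exact h'.symm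
  have hb : ∀ n, dist w (x (n+1)) ≤ k * max (dist w (x n)) (dist (x n) (x (n+1))) := by
    intro n
    have e1 : T (x n) = x (n+1) := (hstep n).symm
    have hco := hcontr w (x n) (hrelw n).symm
    set bn := dist w (x n) with hbn
    set bm := dist w (x (n+1)) with hbm
    set dn := dist (x n) (x (n+1)) with hdn
    have hb0 : (0:ℝ) ≤ bn := dist_nonneg
    have hb1 : (0:ℝ) ≤ bm := dist_nonneg
    set B := max (max bn dn) bm with hB
    have hM : genM T w (x n) ≤ B := by
      have f1 : bn ≤ B := le_trans (le_max_left _ _) (le_max_left _ _)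
      have f2 : dn ≤ B := le_trans (le_max_right _ _) (le_max_left _ _)
      have f3 : bm ≤ B := le_max_right _ _
      simp only [genM, hw, e1, dist_self, add_zero, zero_add, max_le_iff]
      refine ⟨⟨⟨?_, ?_⟩, ?_, ?_⟩, ⟨?_, ?_⟩, ?_, ?_⟩ <;> linarith
    have key : bm ≤ k * B := by
      calc bm = dist (T w) (T (x n)) := by rw [hw, e1]
        _ ≤ k * genM T w (x n) := hco
        _ ≤ k * B := mul_le_mul_of_nonneg_left hM hk0
    rcases le_total bm (max bn dn) with h | h
    · calc bm ≤ k * B := key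
        _ = k * max bn dn := by rw [hB, max_eq_left h]
    · have h2 : bm ≤ k * bm := by rw [hB, max_eq_right h] at key; exact key
      have h3 : (0:ℝ) ≤ max bn dn := le_trans hb0 (le_max_left _ _)
      nlinarith [mul_nonneg hk0 h3]
  set M : ℝ := max (dist w (x 0)) (dist (x 0) (x 1)) with hMdef
  have hM1 : dist w (x 0) ≤ M := by rw [hMdef]; exact le_max_left _ _
  have hM2 : dist (x 0) (x 1) ≤ M := by rw [hMdef]; exact le_max_right _ _
  have hbgeo : ∀ n, dist w (x n) ≤ k ^ n * M := by
    intro n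
    induction n with
    | zero => simpa using hM1
    | succ n ih =>
      have hd : dist (x n) (x (n+1)) ≤ k ^ n * M := by
        calc dist (x n) (x (n+1)) ≤ k ^ n * dist (x 0) (x 1) := hgeo n
          _ ≤ k ^ n * M := mul_le_mul_of_nonneg_left hM2 (pow_nonneg hk0 n)
      calc dist w (x (n+1)) ≤ k * max (dist w (x n)) (dist (x n) (x (n+1))) := hb n
        _ ≤ k * (k ^ n * M) := mul_le_mul_of_nonneg_left (max_le ih hd) hk0
        _ = k ^ (n+1) * M := by ring
  have hg : Filter.Tendsto (fun n => k ^ n * M) Filter.atTop (nhds 0) := by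
    simpa using (tendsto_pow_atTop_nhds_zero_of_lt_one hk0 hk1).mul_const M
  have htend0 : Filter.Tendsto (fun n => dist (x n) w) Filter.atTop (nhds 0) :=
    squeeze_zero (fun n => dist_nonneg) (fun n => by rw [dist_comm]; exact hbgeo n) hg
  have hwz : Filter.Tendsto x Filter.atTop (nhds w) :=
    tendsto_iff_dist_tendsto_zero.mpr htend0
  exact tendsto_nhds_unique hwz hz
end

section
/- In ℝ² with the inner-product orthogonality relation, for any k ∈ ℕ the point (1/k, 1/(k+1)) is not the limit of any orthogonal sequence: if (x^(n)) is a sequence with ⟨x^(n), x^(n+1)⟩ = 0 for all n and x^(n) → (1/k, 1/(k+1)), a contradiction results (eventually both coordinates of x^(n) are positive, making consecutive inner products strictly positive). -/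
theorem special_point_not_limit_of_orthogonal_sequence (k : ℕ) (hk : 1 ≤ k) :
    ¬ ∃ x : ℕ → ℝ × ℝ,
      (∀ n : ℕ, (x n).1 * (x (n+1)).1 + (x n).2 * (x (n+1)).2 = 0) ∧
      Filter.Tendsto x Filter.atTop (nhds ((1 / (k : ℝ), 1 / (k + 1 : ℝ)))) := by
  rintro ⟨x, horth, hlim⟩
  have hk0 : (0:ℝ) < k := by exact_mod_cast hk
  have ha : (0:ℝ) < 1 / (k : ℝ) := by positivity
  have hb : (0:ℝ) < 1 / ((k : ℝ) + 1) := by positivity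
  have h1 : Filter.Tendsto (fun n => (x n).1) Filter.atTop (nhds (1 / (k : ℝ))) :=
    (continuous_fst.tendsto _).comp hlim
  have h2 : Filter.Tendsto (fun n => (x n).2) Filter.atTop (nhds (1 / ((k : ℝ) + 1))) :=
    (continuous_snd.tendsto _).comp hlim
  have e1 : ∀ᶠ n in Filter.atTop, 0 < (x n).1 :=
    h1.eventually (eventually_gt_nhds ha)
  have e2 : ∀ᶠ n in Filter.atTop, 0 < (x n).2 :=
    h2.eventually (eventually_gt_nhds hb)
  have e : ∀ᶠ n in Filter.atTop, 0 < (x n).1 ∧ 0 < (x n).2 := e1.and e2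
  obtain ⟨N, hN⟩ := Filter.eventually_atTop.mp e
  have hN1 := hN N le_rfl
  have hN2 := hN (N+1) (Nat.le_succ N)
  have := horth N
  nlinarith [hN1.1, hN1.2, hN2.1, hN2.2]
end

section
/- Let X = (0,∞) with the usual metric, x ⊥ y iff xy ≤ x or xy ≤ y, and T(x) = 2 for x ∈ (0,1), T(1) = 1, T(x) = 1/3 for x > 1. Then T is not O-continuous at 1: the sequence x_n = 1 − 1/(n+1) is an O-sequence converging to 1, but T(x_n) = 2 for all n, which does not converge to T(1) = 1. -/
theorem T_not_O_continuous_at_one :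
    (let S : Set ℝ := Set.Ioi 0
     let perp : ℝ → ℝ → Prop := fun x y => x * y ≤ x ∨ x * y ≤ y
     let T : ℝ → ℝ := fun x => if x < 1 then 2 else if x = 1 then 1 else 1/3
     let x : ℕ → ℝ := fun n => 1 - 1 / (n + 2 : ℝ)
     (∀ n, x n ∈ S) ∧ (∀ n, perp (x n) (x (n+1))) ∧
     Filter.Tendsto x Filter.atTop (nhds 1) ∧
     (∀ n, T (x n) = 2) ∧ T 1 = 1 ∧
     ¬ Filter.Tendsto (fun n => T (x n)) Filter.atTop (nhds (T 1))) := by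
  intro S perp T x
  have hpos : ∀ n : ℕ, (0:ℝ) < n + 2 := fun n => by positivity
  have hlt1 : ∀ n : ℕ, x n < 1 := by
    intro n
    have : (0:ℝ) < 1 / (n + 2) := by positivity
    simp only [x]; linarith
  have hxpos : ∀ n, (0:ℝ) < x n := by
    intro n
    have h2 : (2:ℝ) ≤ (n:ℝ) + 2 := by
      have : (0:ℝ) ≤ n := Nat.cast_nonneg n
      linarith
    have : 1 / ((n:ℝ) + 2) ≤ 1 / 2 := by
      apply one_div_le_one_div_of_le <;> linarith
    simp only [x]; linarith
  have hT : ∀ n, T (x n) = 2 := by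
    intro n; simp only [T, if_pos (hlt1 n)]
  refine ⟨fun n => hxpos n, ?_, ?_, hT, ?_, ?_⟩
  · intro n
    left
    have h1 : x (n+1) ≤ 1 := le_of_lt (hlt1 (n+1))
    have := hxpos n
    nlinarith
  · have : Filter.Tendsto (fun n : ℕ => 1 / ((n:ℝ) + 2)) Filter.atTop (nhds 0) := by
      simp only [one_div]
      exact Filter.Tendsto.comp tendsto_inv_atTop_zero
        (Filter.tendsto_atTop_add_const_right _ 2 tendsto_natCast_atTop_atTop)
    have h := this.const_sub 1
    simp only [sub_zero] at h
    exact h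
  · simp [T]
  · have hT1 : T 1 = 1 := by simp [T]
    rw [hT1]
    intro h
    have h2 : Filter.Tendsto (fun _ : ℕ => (2:ℝ)) Filter.atTop (nhds 1) := by
      simpa [hT] using h
    have := tendsto_nhds_unique h2 tendsto_const_nhds
    norm_num at this
end
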